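/- arXiv:1105.0160 — 4 statements merged into one kernel-verified Lean document; each statement's English description precedes it below -/
import Mathlib

section
/- (Lemma: i★χ ≡ χ for generic diagonal entries) Let χ be a bi-homomorphism on Π with all c^χ_{ij} finite, and let i ∈ I with χ(α_i,α_i) not a root of unity. Then i★χ ≡ χ, i.e. (i★χ)(α_j,α_j) = χ(α_j,α_j) for all j, and (i★χ)(α_j,α_k)·(i★χ)(α_k,α_j) = χ(α_j,α_k)χ(α_k,α_j) for all j, k. -/
/-- `ℤΠ`, the free `ℤ`-module with basis `Π = {α_1,…,α_N}`. -/
abbrev Mz (N : ℕ) := Fin N →₀ ℤ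

/-- The simple "root" `α_i`, the `i`-th basis element of `ℤΠ`. -/
noncomputable def alphav {N : ℕ} (i : Fin N) : Mz N := Finsupp.single i 1

/-- A bi-homomorphism `χ : ℤΠ × ℤΠ → ℂ*`. -/
def IsBihom {N : ℕ} (χ : Mz N → Mz N → ℂˣ) : Prop :=
  (∀ a b c : Mz N, χ a (b + c) = χ a b * χ a c) ∧
  (∀ a b c : Mz N, χ (a + b) c = χ a c * χ b c)

/-- `(m)_t := 1 + t + ⋯ + t^{m-1}`. -/
noncomputable def qnum (m : ℕ) (t : ℂ) : ℂ := ∑ j ∈ Finset.range m, t ^ j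

/-- `(m)_t! := ∏_{j=1}^m (j)_t`. -/
noncomputable def qfact (m : ℕ) (t : ℂ) : ℂ := ∏ j ∈ Finset.range m, qnum (j + 1) t

/-- `(m; t₁, t₂)! := ∏_{j=1}^m (1 - t₁^{j-1} t₂)`. -/
noncomputable def tfact (m : ℕ) (t₁ t₂ : ℂ) : ℂ := ∏ j ∈ Finset.range m, (1 - t₁ ^ j * t₂)

/-- The Cartan entry `c` (off-diagonal part) attached to `q = q_{ii}` and `r = q_{ij}q_{ji}`:
`⊥` (i.e. `-∞`) if `(m)_q!(m;q,r)! ≠ 0` for all `m`, and otherwise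
`-Max{m ∈ ℤ≥0 | (m)_q!(m;q,r)! ≠ 0}`. -/
noncomputable def cEntry (q r : ℂ) : WithBot ℤ :=
  letI := Classical.propDecidable
  if ∀ m : ℕ, qfact m q * tfact m q r ≠ 0 then ⊥
  else ((-((sSup {m : ℕ | qfact m q * tfact m q r ≠ 0} : ℕ) : ℤ) : ℤ) : WithBot ℤ)

/-- The generalized Cartan matrix `c^χ_{ij}` of a bi-homomorphism `χ`. -/
noncomputable def cMat {N : ℕ} (χ : Mz N → Mz N → ℂˣ) (i j : Fin N) : WithBot ℤ :=
  if i = j then 2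
  else cEntry (χ (alphav i) (alphav i))
    ((χ (alphav i) (alphav j) : ℂ) * (χ (alphav j) (alphav i) : ℂ))

/-- `c^χ_{ij}` as an integer (junk value `0` in the `-∞` case). -/
noncomputable def cInt {N : ℕ} (χ : Mz N → Mz N → ℂˣ) (i j : Fin N) : ℤ :=
  WithBot.unbotD 0 (cMat χ i j)

/-- The reflection `s^χ_i ∈ Aut_ℤ(ℤΠ)`, `s^χ_i(α_j) = α_j - c^χ_{ij} α_i`,
extended `ℤ`-linearly. -/
noncomputable def sMap {N : ℕ} (χ : Mz N → Mz N → ℂˣ) (i : Fin N) (v : Mz N) : Mz N :=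
  v - (v.sum fun j n => n * cInt χ i j) • alphav i

/-- The Lusztig twist `i★χ`, `(i★χ)(α,β) := χ(s^χ_i α, s^χ_i β)`. -/
noncomputable def starB {N : ℕ} (i : Fin N) (χ : Mz N → Mz N → ℂˣ) :
    Mz N → Mz N → ℂˣ :=
  fun a b => χ (sMap χ i a) (sMap χ i b)

/-! The reflection changes `χ(α_j, α_k)` by powers of `q_{ji}`, `q_{ij}` and `q := q_{ii}`. When `q` is
not a root of unity, finiteness of `c := c^χ_{ij}` means that the smallest `m` with
`q^m q_{ij} q_{ji} = 1` exists and equals `-c`, so `q_{ij} q_{ji} = q^c`; with this relation the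
correction factors cancel, on the diagonal and in the symmetrised products. -/

section CartanEntry

variable {q : ℂ}

lemma qnum_ne_zero (hq : ∀ m : ℕ, 0 < m → q ^ m ≠ 1) {m : ℕ} (hm : 0 < m) : qnum m q ≠ 0 := by
  have hq1 : q ≠ 1 := by simpa using hq 1 one_pos
  rw [qnum, geom_sum_eq hq1]
  exact div_ne_zero (sub_ne_zero.mpr (hq m hm)) (sub_ne_zero.mpr hq1)

lemma qfact_ne_zero (hq : ∀ m : ℕ, 0 < m → q ^ m ≠ 1) (m : ℕ) : qfact m q ≠ 0 :=
  Finset.prod_ne_zero_iff.mpr fun j _ => qnum_ne_zero hq j.succ_pos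

lemma tfact_ne_zero_iff {m : ℕ} {t₁ t₂ : ℂ} :
    tfact m t₁ t₂ ≠ 0 ↔ ∀ k < m, t₁ ^ k * t₂ ≠ 1 := by
  rw [tfact, Finset.prod_ne_zero_iff]
  simp only [Finset.mem_range, sub_ne_zero]
  exact forall₂_congr fun _ _ => ne_comm

lemma exists_pow_mul_eq_one_of_cEntry_ne_bot (hq : ∀ m : ℕ, 0 < m → q ^ m ≠ 1) {r : ℂ}
    (hne : cEntry q r ≠ ⊥) : ∃ k : ℕ, q ^ k * r = 1 := by
  by_contra! h
  refine hne (if_pos fun m => mul_ne_zero (qfact_ne_zero hq m) ?_)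
  exact tfact_ne_zero_iff.mpr fun k _ => h k

lemma cEntry_eq_neg_find (hq : ∀ m : ℕ, 0 < m → q ^ m ≠ 1) {r : ℂ} (h : ∃ k : ℕ, q ^ k * r = 1) :
    cEntry q r = ((-(Nat.find h : ℤ) : ℤ) : WithBot ℤ) := by
  have hset : {m : ℕ | qfact m q * tfact m q r ≠ 0} = Set.Iic (Nat.find h) := by
    ext m
    simp [qfact_ne_zero hq, tfact_ne_zero_iff, Nat.le_find_iff]
  have hvanish : ¬ ∀ m : ℕ, qfact m q * tfact m q r ≠ 0 := fun hall => by
    have hmem : Nat.find h + 1 ∈ {m : ℕ | qfact m q * tfact m q r ≠ 0} := hall _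
    rw [hset] at hmem
    exact (Nat.lt_succ_self _).not_ge hmem
  rw [cEntry, if_neg hvanish, hset, csSup_Iic]

lemma zpow_unbotD_cEntry (hq : ∀ m : ℕ, 0 < m → q ^ m ≠ 1) {r : ℂ} (hne : cEntry q r ≠ ⊥) :
    q ^ (cEntry q r).unbotD 0 = r := by
  have h := exists_pow_mul_eq_one_of_cEntry_ne_bot hq hne
  rw [cEntry_eq_neg_find hq h, WithBot.unbotD_coe, zpow_neg, zpow_natCast]
  exact (eq_inv_of_mul_eq_one_right (Nat.find_spec h)).symm

end CartanEntry

namespace IsBihom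

variable {N : ℕ} {χ : Mz N → Mz N → ℂˣ} (hχ : IsBihom χ)
include hχ

lemma map_zsmul_right (a b : Mz N) (n : ℤ) : χ a (n • b) = χ a b ^ n :=
  (AddMonoidHom.mk' (fun b => Additive.ofMul (χ a b)) (hχ.1 a)).map_zsmul n b

lemma map_zsmul_left (a b : Mz N) (n : ℤ) : χ (n • a) b = χ a b ^ n :=
  (AddMonoidHom.mk' (fun a => Additive.ofMul (χ a b)) fun a a' => hχ.2 a a' b).map_zsmul n a

lemma map_sub_zsmul (a b u : Mz N) (c d : ℤ) :
    χ (a - c • u) (b - d • u) = χ a b * χ a u ^ (-d) * χ u b ^ (-c) * χ u u ^ (c * d) := by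
  simp only [sub_eq_add_neg, ← neg_smul, hχ.1, hχ.2, hχ.map_zsmul_left, hχ.map_zsmul_right]
  apply Additive.ofMul.injective
  simp only [ofMul_mul, ofMul_zpow]
  module

variable {a b u : Mz N} {c d : ℤ}

lemma map_sub_zsmul_self (ha : χ a u * χ u a = χ u u ^ c) :
    χ (a - c • u) (a - c • u) = χ a a := by
  rw [hχ.map_sub_zsmul]
  apply Additive.ofMul.injective
  replace ha := congrArg Additive.ofMul ha
  simp only [ofMul_mul, ofMul_zpow] at ha ⊢
  linear_combination (norm := module) (-c) • ha

lemma map_sub_zsmul_mul_map_sub_zsmul (ha : χ a u * χ u a = χ u u ^ c)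
    (hb : χ b u * χ u b = χ u u ^ d) :
    χ (a - c • u) (b - d • u) * χ (b - d • u) (a - c • u) = χ a b * χ b a := by
  rw [hχ.map_sub_zsmul, hχ.map_sub_zsmul]
  apply Additive.ofMul.injective
  replace ha := congrArg Additive.ofMul ha
  replace hb := congrArg Additive.ofMul hb
  simp only [ofMul_mul, ofMul_zpow] at ha hb ⊢
  linear_combination (norm := module) (-d) • ha + (-c) • hb

end IsBihom

section Reflection

variable {N : ℕ} (χ : Mz N → Mz N → ℂˣ)

lemma sMap_alphav (i j : Fin N) : sMap χ i (alphav j) = alphav j - cInt χ i j • alphav i := by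
  rw [sMap, alphav, Finsupp.sum_single_index] <;> simp

lemma cInt_self (i : Fin N) : cInt χ i i = 2 := by
  rw [cInt, cMat, if_pos rfl]
  rfl

variable {χ}

lemma map_mul_map_eq_zpow_cInt {i j : Fin N} (hfin : cMat χ i j ≠ ⊥)
    (hq : ∀ m : ℕ, 0 < m → (χ (alphav i) (alphav i) : ℂ) ^ m ≠ 1) :
    χ (alphav j) (alphav i) * χ (alphav i) (alphav j) = χ (alphav i) (alphav i) ^ cInt χ i j := by
  by_cases hij : i = j
  · subst hij
    rw [cInt_self, zpow_two]
  · have hc : cMat χ i j = cEntry (χ (alphav i) (alphav i))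
        ((χ (alphav i) (alphav j) : ℂ) * (χ (alphav j) (alphav i) : ℂ)) := if_neg hij
    apply Units.ext
    rw [Units.val_mul, Units.val_zpow_eq_zpow_val, cInt, hc, zpow_unbotD_cEntry hq (hc ▸ hfin),
      mul_comm]

end Reflection

/-- If χ(α_i,α_i) is not a root of unity and all c^χ_{jk} are finite, then i★χ ≡ χ:
same diagonal values and same products on pairs of simple roots. -/
theorem star_equiv_of_nonroot {N : ℕ} (χ : Mz N → Mz N → ℂˣ) (hχ : IsBihom χ) (i : Fin N)
    (hfin : ∀ j k : Fin N, cMat χ j k ≠ ⊥)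
    (hq : ∀ m : ℕ, 0 < m → (χ (alphav i) (alphav i) : ℂ) ^ m ≠ 1) :
    (∀ j : Fin N, starB i χ (alphav j) (alphav j) = χ (alphav j) (alphav j)) ∧
    (∀ j k : Fin N,
      (starB i χ (alphav j) (alphav k) : ℂ) * (starB i χ (alphav k) (alphav j) : ℂ) =
      (χ (alphav j) (alphav k) : ℂ) * (χ (alphav k) (alphav j) : ℂ)) := by
  have hrel (j : Fin N) := map_mul_map_eq_zpow_cInt (hfin i j) hq
  refine ⟨fun j => ?_, fun j k => ?_⟩
  · rw [starB, sMap_alphav]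
    exact hχ.map_sub_zsmul_self (hrel j)
  · simp only [starB, sMap_alphav]
    exact_mod_cast congrArg Units.val (hχ.map_sub_zsmul_mul_map_sub_zsmul (hrel j) (hrel k))
end

section
/- In the algebra Ũ(χ), for all m ∈ N and i ∈ I, the commutator identity [Ẽ_i, F̃_i^m] = (m)_{q_{ii}} ( -K̃_{α_i} + q_{ii}^{-m+1} L̃_{α_i} ) F̃_i^{m-1} holds, where q_{ii} = χ(α_i, α_i). -/
/-- Generators of the algebra `Ũ(χ)`: `K̃_α, L̃_α (α ∈ ℤΠ)`, `Ẽ_i, F̃_i (i ∈ I)`. -/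
inductive Gen (N : ℕ)
  | K : Mz N → Gen N
  | L : Mz N → Gen N
  | E : Fin N → Gen N
  | F : Fin N → Gen N

/-- The free `ℂ`-algebra on the generators. -/
abbrev FA (N : ℕ) := FreeAlgebra ℂ (Gen N)

/-- Embedding of a generator into the free algebra. -/
noncomputable def gen {N : ℕ} (x : Gen N) : FA N := FreeAlgebra.ι ℂ x

/-- The defining relations of `Ũ(χ)`. -/
inductive URel {N : ℕ} (χ : Mz N → Mz N → ℂˣ) : FA N → FA N → Prop
  | K0 : URel χ (gen (Gen.K 0)) 1
  | L0 : URel χ (gen (Gen.L 0)) 1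
  | KK (a b : Mz N) : URel χ (gen (Gen.K a) * gen (Gen.K b)) (gen (Gen.K (a + b)))
  | LL (a b : Mz N) : URel χ (gen (Gen.L a) * gen (Gen.L b)) (gen (Gen.L (a + b)))
  | KL (a b : Mz N) : URel χ (gen (Gen.K a) * gen (Gen.L b)) (gen (Gen.L b) * gen (Gen.K a))
  | KE (a : Mz N) (i : Fin N) : URel χ (gen (Gen.K a) * gen (Gen.E i))
      ((χ a (alphav i) : ℂ) • (gen (Gen.E i) * gen (Gen.K a)))
  | LE (a : Mz N) (i : Fin N) : URel χ (gen (Gen.L a) * gen (Gen.E i))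
      ((χ (-alphav i) a : ℂ) • (gen (Gen.E i) * gen (Gen.L a)))
  | KF (a : Mz N) (i : Fin N) : URel χ (gen (Gen.K a) * gen (Gen.F i))
      ((χ a (-alphav i) : ℂ) • (gen (Gen.F i) * gen (Gen.K a)))
  | LF (a : Mz N) (i : Fin N) : URel χ (gen (Gen.L a) * gen (Gen.F i))
      ((χ (alphav i) a : ℂ) • (gen (Gen.F i) * gen (Gen.L a)))
  | EF (i j : Fin N) : URel χ (gen (Gen.E i) * gen (Gen.F j) - gen (Gen.F j) * gen (Gen.E i))
      (if i = j then -gen (Gen.K (alphav i)) + gen (Gen.L (alphav i)) else 0)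

/-- The algebra `Ũ(χ)`. -/
abbrev tU {N : ℕ} (χ : Mz N → Mz N → ℂˣ) := RingQuot (URel χ)

/-- `K̃_α` in `Ũ(χ)`. -/
noncomputable def elK {N : ℕ} (χ : Mz N → Mz N → ℂˣ) (a : Mz N) : tU χ :=
  RingQuot.mkAlgHom ℂ (URel χ) (gen (Gen.K a))

/-- `L̃_α` in `Ũ(χ)`. -/
noncomputable def elL {N : ℕ} (χ : Mz N → Mz N → ℂˣ) (a : Mz N) : tU χ :=
  RingQuot.mkAlgHom ℂ (URel χ) (gen (Gen.L a))

/-- `Ẽ_i` in `Ũ(χ)`. -/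
noncomputable def elE {N : ℕ} (χ : Mz N → Mz N → ℂˣ) (i : Fin N) : tU χ :=
  RingQuot.mkAlgHom ℂ (URel χ) (gen (Gen.E i))

/-- `F̃_i` in `Ũ(χ)`. -/
noncomputable def elF {N : ℕ} (χ : Mz N → Mz N → ℂˣ) (i : Fin N) : tU χ :=
  RingQuot.mkAlgHom ℂ (URel χ) (gen (Gen.F i))

/-- Iterated root vector `Ẽ⁺_{m,α_i,α_j}`. -/
noncomputable def Ep {N : ℕ} (χ : Mz N → Mz N → ℂˣ) (i j : Fin N) : ℕ → tU χ
  | 0 => elE χ j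
  | (m + 1) => elE χ i * Ep χ i j m -
      ((χ (alphav i) (alphav i) : ℂ) ^ m * (χ (alphav i) (alphav j) : ℂ)) •
        (Ep χ i j m * elE χ i)

/-- Iterated root vector `F̃⁺_{m,α_i,α_j}`. -/
noncomputable def Fp {N : ℕ} (χ : Mz N → Mz N → ℂˣ) (i j : Fin N) : ℕ → tU χ
  | 0 => elF χ j
  | (m + 1) => elF χ i * Fp χ i j m -
      ((χ (alphav i) (alphav i) : ℂ) ^ m * (χ (alphav j) (alphav i) : ℂ)) •
        (Fp χ i j m * elF χ i)

/-!
Write `q = χ(α_i, α_i)`. The defining relations give `F̃_i K̃_{α_i} = q K̃_{α_i} F̃_i` (through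
`χ(α_i, -α_i) = q⁻¹`) and `F̃_i L̃_{α_i} = q⁻¹ L̃_{α_i} F̃_i`. As `[Ẽ_i, ·]` is a derivation,
`[Ẽ_i, F̃_i^m] = ∑_{j<m} F̃_i^j (-K̃_{α_i} + L̃_{α_i}) F̃_i^{m-1-j}`, and moving `F̃_i^j` to the right
turns this into `(-(m)_q K̃_{α_i} + (m)_{q⁻¹} L̃_{α_i}) F̃_i^{m-1}`; finally
`(m)_{q⁻¹} = q^{-(m-1)} (m)_q`.
-/

section SkewCommutation

open Finset

variable {R A : Type*} [CommRing R] [Ring A] [Algebra R A]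

theorem pow_mul_eq_smul_mul_pow {F K : A} {a : R} (h : F * K = a • (K * F)) (n : ℕ) :
    F ^ n * K = a ^ n • (K * F ^ n) := by
  induction n with
  | zero => simp
  | succ n ih =>
    rw [pow_succ, mul_assoc, h, mul_smul_comm, ← mul_assoc, ih, smul_mul_assoc, smul_smul,
      mul_assoc, ← pow_succ, ← pow_succ']

theorem mul_pow_succ_sub_pow_succ_mul {E F K L : A} {a b : R}
    (hEF : E * F - F * E = -K + L) (hFK : F * K = a • (K * F)) (hFL : F * L = b • (L * F))
    (m : ℕ) :
    E * F ^ (m + 1) - F ^ (m + 1) * E =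
      ((∑ j ∈ range (m + 1), a ^ j) • -K + (∑ j ∈ range (m + 1), b ^ j) • L) * F ^ m := by
  induction m with
  | zero => simpa using hEF
  | succ m ih =>
    have hleibniz : E * F ^ (m + 2) - F ^ (m + 2) * E =
        (E * F ^ (m + 1) - F ^ (m + 1) * E) * F + F ^ (m + 1) * (E * F - F * E) := by
      rw [pow_succ _ (m + 1)]
      noncomm_ring
    rw [hleibniz, ih, hEF, mul_add, mul_neg, pow_mul_eq_smul_mul_pow hFK,
      pow_mul_eq_smul_mul_pow hFL, sum_range_succ _ (m + 1), sum_range_succ _ (m + 1)]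
    simp only [add_mul, smul_mul_assoc, neg_mul, mul_assoc, ← pow_succ]
    module

end SkewCommutation

open Finset in
theorem geom_sum_inv_eq_inv_pow_mul_geom_sum {K : Type*} [Field K] {q : K} (hq : q ≠ 0)
    (n : ℕ) : ∑ j ∈ range (n + 1), q⁻¹ ^ j = q⁻¹ ^ n * ∑ j ∈ range (n + 1), q ^ j := by
  rw [← sum_range_reflect, mul_sum]
  refine sum_congr rfl fun j hj => ?_
  rw [add_tsub_cancel_right, inv_pow_sub₀ hq (Nat.le_of_lt_succ (mem_range.1 hj)), inv_pow]

theorem IsBihom.apply_neg_right {N : ℕ} {χ : Mz N → Mz N → ℂˣ} (hχ : IsBihom χ) (a b : Mz N) :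
    χ a (-b) = (χ a b)⁻¹ := by
  have h0 : χ a 0 = 1 := left_eq_mul.mp (by simpa using hχ.1 a 0 0 : χ a 0 = χ a 0 * χ a 0)
  refine eq_inv_of_mul_eq_one_right ?_
  rw [← hχ.1, add_neg_cancel, h0]

section Relations

variable {N : ℕ} (χ : Mz N → Mz N → ℂˣ) (i : Fin N)

theorem elE_mul_elF_sub_elF_mul_elE :
    elE χ i * elF χ i - elF χ i * elE χ i = -elK χ (alphav i) + elL χ (alphav i) := by
  simpa [elE, elF, elK, elL] using RingQuot.mkAlgHom_rel ℂ (URel.EF (χ := χ) i i)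

theorem elF_mul_elL :
    elF χ i * elL χ (alphav i) =
      (χ (alphav i) (alphav i) : ℂ)⁻¹ • (elL χ (alphav i) * elF χ i) := by
  have hLF : elL χ (alphav i) * elF χ i =
      (χ (alphav i) (alphav i) : ℂ) • (elF χ i * elL χ (alphav i)) := by
    simpa [elL, elF] using RingQuot.mkAlgHom_rel ℂ (URel.LF (χ := χ) (alphav i) i)
  rw [hLF, smul_smul, inv_mul_cancel₀ (Units.ne_zero _), one_smul]

end Relations

theorem elF_mul_elK {N : ℕ} {χ : Mz N → Mz N → ℂˣ} (hχ : IsBihom χ) (i : Fin N) :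
    elF χ i * elK χ (alphav i) =
      (χ (alphav i) (alphav i) : ℂ) • (elK χ (alphav i) * elF χ i) := by
  have hKF : elK χ (alphav i) * elF χ i =
      (χ (alphav i) (-alphav i) : ℂ) • (elF χ i * elK χ (alphav i)) := by
    simpa [elK, elF] using RingQuot.mkAlgHom_rel ℂ (URel.KF (χ := χ) (alphav i) i)
  rw [hKF, hχ.apply_neg_right, smul_smul, Units.val_inv_eq_inv_val,
    mul_inv_cancel₀ (Units.ne_zero _), one_smul]

theorem commutator_E_Fpow_general {N : ℕ} (χ : Mz N → Mz N → ℂˣ) (hχ : IsBihom χ)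
    (i : Fin N) (m : ℕ) :
    elE χ i * elF χ i ^ m - elF χ i ^ m * elE χ i =
      qnum m (χ (alphav i) (alphav i)) •
        ((-elK χ (alphav i) +
          (((χ (alphav i) (alphav i) : ℂ))⁻¹ ^ (m - 1)) • elL χ (alphav i)) *
          elF χ i ^ (m - 1)) := by
  cases m with
  | zero => simp [qnum]
  | succ m =>
    rw [mul_pow_succ_sub_pow_succ_mul (elE_mul_elF_sub_elF_mul_elE χ i) (elF_mul_elK hχ i)
      (elF_mul_elL χ i), geom_sum_inv_eq_inv_pow_mul_geom_sum (Units.ne_zero _), qnum,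
      add_tsub_cancel_right, ← smul_mul_assoc]
    congr 1
    module

/-- In the algebra U~(chi): [E_i, F_i^m] = (m)_{q_ii} (-K_{a_i} + q_ii^{-m+1} L_{a_i}) F_i^{m-1}. -/
theorem commutator_E_Fpow {N : ℕ} (χ : Mz N → Mz N → ℂˣ) (hχ : IsBihom χ)
    (i : Fin N) (m : ℕ) (hm : 1 ≤ m) :
    elE χ i * elF χ i ^ m - elF χ i ^ m * elE χ i =
      qnum m (χ (alphav i) (alphav i)) •
        ((-elK χ (alphav i) +
          (((χ (alphav i) (alphav i) : ℂ))⁻¹ ^ (m - 1)) • elL χ (alphav i)) *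
          elF χ i ^ (m - 1)) :=
  commutator_E_Fpow_general χ hχ i m
end

section
/- In the algebra Ũ(χ), for m ∈ N and i ≠ j in I, [Ẽ_i, F̃^+_{m,α_i,α_j}] = -(m)_{q_{ii}} (m; q_{ii}, q_{ij}q_{ji}) K̃_{α_i} F̃^+_{m-1,α_i,α_j}, where q_{kl} = χ(α_k, α_l). -/
section Aux
variable {N : ℕ} {χ : Mz N → Mz N → ℂˣ}

lemma chi_zero_right (hχ : IsBihom χ) (a : Mz N) : χ a 0 = 1 := by
  have h := hχ.1 a 0 0
  rw [add_zero] at h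
  exact (left_eq_mul.mp h)

lemma chi_neg_right (hχ : IsBihom χ) (a b : Mz N) : χ a (-b) = (χ a b)⁻¹ := by
  have h := hχ.1 a b (-b)
  rw [add_neg_cancel, chi_zero_right hχ] at h
  exact (inv_eq_of_mul_eq_one_right h.symm).symm

lemma rel_KF (hχ : IsBihom χ) (a : Mz N) (k : Fin N) :
    elK χ a * elF χ k = (((χ a (alphav k))⁻¹ : ℂˣ) : ℂ) • (elF χ k * elK χ a) := by
  have h := RingQuot.mkAlgHom_rel ℂ (URel.KF (χ := χ) a k)
  rw [map_mul, map_smul, map_mul, chi_neg_right hχ] at h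
  exact h

lemma F_K (hχ : IsBihom χ) (a : Mz N) (k : Fin N) :
    elF χ k * elK χ a = (χ a (alphav k) : ℂ) • (elK χ a * elF χ k) := by
  rw [rel_KF hχ a k, smul_smul, Units.val_inv_eq_inv_val,
    mul_inv_cancel₀ (Units.ne_zero _), one_smul]

lemma rel_LF (a : Mz N) (k : Fin N) :
    elL χ a * elF χ k = (χ (alphav k) a : ℂ) • (elF χ k * elL χ a) := by
  have h := RingQuot.mkAlgHom_rel ℂ (URel.LF (χ := χ) a k)
  rw [map_mul, map_smul, map_mul] at h
  exact h

lemma rel_EF (k l : Fin N) :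
    elE χ k * elF χ l - elF χ l * elE χ k =
      if k = l then -elK χ (alphav k) + elL χ (alphav k) else 0 := by
  have h := RingQuot.mkAlgHom_rel ℂ (URel.EF (χ := χ) k l)
  rw [map_sub, map_mul, map_mul, apply_ite (RingQuot.mkAlgHom ℂ (URel χ)),
    map_add, map_neg, map_zero] at h
  exact h

lemma E_F_ne {k l : Fin N} (h : k ≠ l) : elE χ k * elF χ l = elF χ l * elE χ k := by
  have := rel_EF (χ := χ) k l
  rw [if_neg h] at this
  exact sub_eq_zero.mp this

lemma E_F_eq (k : Fin N) :
    elE χ k * elF χ k = elF χ k * elE χ k + (-elK χ (alphav k) + elL χ (alphav k)) := by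
  have := rel_EF (χ := χ) k k
  rw [if_pos rfl] at this
  exact sub_eq_iff_eq_add'.mp this

/-- assoc variant for `a*b = c•(b*a)`. -/
lemma comm_assoc {A : Type*} [Ring A] [Algebra ℂ A] {a b : A} {c : ℂ}
    (h : a * b = c • (b * a)) (x : A) : a * (b * x) = c • (b * (a * x)) := by
  rw [← mul_assoc, h, smul_mul_assoc, mul_assoc]

/-- assoc variant for `a*b = b*a + d`. -/
lemma comm_assoc' {A : Type*} [Ring A] [Algebra ℂ A] {a b d : A}
    (h : a * b = b * a + d) (x : A) : a * (b * x) = b * (a * x) + d * x := by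
  rw [← mul_assoc, h, add_mul, mul_assoc]

/-- assoc variant for `a*b = b*a + c•d`. -/
lemma comm_assoc'' {A : Type*} [Ring A] [Algebra ℂ A] {a b d : A} {c : ℂ}
    (h : a * b = b * a + c • d) (x : A) : a * (b * x) = b * (a * x) + c • (d * x) := by
  rw [← mul_assoc, h, add_mul, mul_assoc, smul_mul_assoc]

lemma Fp_K (hχ : IsBihom χ) (i j : Fin N) (m : ℕ) :
    Fp χ i j m * elK χ (alphav i) =
      ((χ (alphav i) (alphav j) : ℂ) * (χ (alphav i) (alphav i) : ℂ) ^ m) •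
        (elK χ (alphav i) * Fp χ i j m) := by
  induction m with
  | zero => simpa [Fp] using F_K hχ (alphav i) j
  | succ m ih =>
    have hFK := F_K hχ (alphav i) i
    show (elF χ i * Fp χ i j m - _ • (Fp χ i j m * elF χ i)) * elK χ (alphav i) =
      _ • (elK χ (alphav i) * (elF χ i * Fp χ i j m - _ • (Fp χ i j m * elF χ i)))
    rw [sub_mul, smul_mul_assoc, mul_assoc, ih, mul_assoc, hFK]
    simp only [mul_smul_comm, smul_mul_assoc, smul_smul, mul_sub, smul_sub, mul_assoc]
    rw [comm_assoc hFK (Fp χ i j m), comm_assoc ih (elF χ i)]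
    module

lemma L_Fp (hχ : IsBihom χ) (i j : Fin N) (m : ℕ) :
    elL χ (alphav i) * Fp χ i j m =
      ((χ (alphav j) (alphav i) : ℂ) * (χ (alphav i) (alphav i) : ℂ) ^ m) •
        (Fp χ i j m * elL χ (alphav i)) := by
  induction m with
  | zero => simpa [Fp] using rel_LF (χ := χ) (alphav i) j
  | succ m ih =>
    have hLF := rel_LF (χ := χ) (alphav i) i
    show elL χ (alphav i) * (elF χ i * Fp χ i j m - _ • (Fp χ i j m * elF χ i)) =
      _ • ((elF χ i * Fp χ i j m - _ • (Fp χ i j m * elF χ i)) * elL χ (alphav i))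
    rw [mul_sub, mul_smul_comm, comm_assoc hLF (Fp χ i j m), ih, ← mul_assoc, ih,
      smul_mul_assoc, mul_assoc, hLF]
    simp only [mul_smul_comm, smul_mul_assoc, smul_smul, sub_mul, smul_sub, mul_assoc]
    module

end Aux

section Key
variable {N : ℕ} {χ : Mz N → Mz N → ℂˣ}

lemma comm_assoc0 {A : Type*} [Ring A] {a b : A} (h : a * b = b * a) (x : A) :
    a * (b * x) = b * (a * x) := by rw [← mul_assoc, h, mul_assoc]

lemma tU_mul_neg {N : ℕ} {χ : Mz N → Mz N → ℂˣ} (x y : tU χ) : x * -y = -(x * y) := mul_neg x y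

lemma tU_neg_mul {N : ℕ} {χ : Mz N → Mz N → ℂˣ} (x y : tU χ) : -x * y = -(x * y) := neg_mul x y

lemma cRec (q r s : ℂ) (m : ℕ) :
    -(qnum (m + 1 + 1) q * (1 - q ^ (m + 1) * (r * s))) =
      q * -(qnum (m + 1) q * (1 - q ^ m * (r * s))) - 1 +
        q ^ (m + 1) * s * (r * q ^ (m + 1)) := by
  have h2 := geom_sum_mul q (m + 1)
  have h : qnum (m + 1 + 1) q = qnum (m + 1) q + q ^ (m + 1) := Finset.sum_range_succ _ _
  have hq : qnum (m + 1) q = ∑ i ∈ Finset.range (m + 1), q ^ i := rfl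
  rw [h, hq]
  linear_combination h2

lemma key (hχ : IsBihom χ) (i j : Fin N) (hij : i ≠ j) (m : ℕ) :
    elE χ i * Fp χ i j (m + 1) - Fp χ i j (m + 1) * elE χ i =
      (-(qnum (m + 1) (χ (alphav i) (alphav i)) *
          (1 - (χ (alphav i) (alphav i) : ℂ) ^ m *
            ((χ (alphav i) (alphav j) : ℂ) * (χ (alphav j) (alphav i) : ℂ))))) •
        (elK χ (alphav i) * Fp χ i j m) := by
  induction m with
  | zero =>
    have h1 : qnum 1 (χ (alphav i) (alphav i) : ℂ) = 1 := by simp [qnum]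
    have hEFi := E_F_eq (χ := χ) i
    have hEFj := E_F_ne (χ := χ) hij
    have hFjK := F_K hχ (alphav i) j
    have hLFj := rel_LF (χ := χ) (alphav i) j
    show elE χ i * (elF χ i * elF χ j - _ • (elF χ j * elF χ i)) -
        (elF χ i * elF χ j - _ • (elF χ j * elF χ i)) * elE χ i =
      _ • (elK χ (alphav i) * elF χ j)
    rw [h1, mul_sub, sub_mul, mul_smul_comm, smul_mul_assoc,
      comm_assoc' hEFi (elF χ j), comm_assoc0 hEFj (elF χ i), hEFj, hEFi]
    simp only [mul_add, add_mul, neg_mul, mul_neg, tU_neg_mul, tU_mul_neg, neg_neg, mul_smul_comm, smul_mul_assoc,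
      smul_add, smul_neg, smul_smul, mul_assoc, hFjK, hLFj]
    module
  | succ m ih =>
    have hEFi := E_F_eq (χ := χ) i
    have hFK := F_K hχ (alphav i) i
    have hGK := Fp_K hχ i j (m + 1)
    have hLG := L_Fp hχ i j (m + 1)
    have hEG : elE χ i * Fp χ i j (m + 1) = Fp χ i j (m + 1) * elE χ i +
        (-(qnum (m + 1) (χ (alphav i) (alphav i)) *
          (1 - (χ (alphav i) (alphav i) : ℂ) ^ m *
            ((χ (alphav i) (alphav j) : ℂ) * (χ (alphav j) (alphav i) : ℂ))))) •
        (elK χ (alphav i) * Fp χ i j m) := by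
      rw [← ih]; abel
    have hFiFm : elF χ i * Fp χ i j m = Fp χ i j (m + 1) +
        ((χ (alphav i) (alphav i) : ℂ) ^ m * (χ (alphav j) (alphav i) : ℂ)) •
          (Fp χ i j m * elF χ i) := by
      show elF χ i * Fp χ i j m =
        (elF χ i * Fp χ i j m -
          ((χ (alphav i) (alphav i) : ℂ) ^ m * (χ (alphav j) (alphav i) : ℂ)) •
            (Fp χ i j m * elF χ i)) +
        ((χ (alphav i) (alphav i) : ℂ) ^ m * (χ (alphav j) (alphav i) : ℂ)) •
          (Fp χ i j m * elF χ i)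
      abel
    show elE χ i * (elF χ i * Fp χ i j (m + 1) - _ • (Fp χ i j (m + 1) * elF χ i)) -
        (elF χ i * Fp χ i j (m + 1) - _ • (Fp χ i j (m + 1) * elF χ i)) * elE χ i =
      _ • (elK χ (alphav i) * Fp χ i j (m + 1))
    rw [cRec ((χ (alphav i) (alphav i) : ℂ)) ((χ (alphav i) (alphav j) : ℂ))
        ((χ (alphav j) (alphav i) : ℂ)) m]
    rw [mul_sub, sub_mul, mul_smul_comm, smul_mul_assoc,
      comm_assoc' hEFi (Fp χ i j (m + 1)), comm_assoc'' hEG (elF χ i), hEG, hEFi]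
    simp only [mul_add, add_mul, neg_mul, mul_neg, tU_neg_mul, tU_mul_neg, neg_neg, mul_smul_comm, smul_mul_assoc,
      smul_add, smul_neg, smul_smul, mul_assoc, comm_assoc hFK (Fp χ i j m), hFiFm,
      hGK, hLG, smul_sub, mul_sub, sub_mul]
    module

end Key

/-- In U~(chi): [E_i, F+_{m,a_i,a_j}] = -(m)_{q_ii} (m; q_ii, q_ij q_ji) K_{a_i} F+_{m-1,a_i,a_j}. -/
theorem commutator_E_Fp {N : ℕ} (χ : Mz N → Mz N → ℂˣ) (hχ : IsBihom χ)
    (i j : Fin N) (hij : i ≠ j) (m : ℕ) (hm : 1 ≤ m) :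
    elE χ i * Fp χ i j m - Fp χ i j m * elE χ i =
      (-(qnum m (χ (alphav i) (alphav i)) *
          (1 - (χ (alphav i) (alphav i) : ℂ) ^ (m - 1) *
            ((χ (alphav i) (alphav j) : ℂ) * (χ (alphav j) (alphav i) : ℂ))))) •
        (elK χ (alphav i) * Fp χ i j (m - 1)) := by
  cases m with
  | zero => exact absurd hm (by omega)
  | succ k =>
    simp only [Nat.add_sub_cancel]
    exact key hχ i j hij k
end

section
/- In the algebra Ũ(χ), for i ≠ j in I and m ∈ Z≥0, [Ẽ^+_{m,α_i,α_j}, F̃^+_{m,α_i,α_j}] = (m)_{q_{ii}}! (m; q_{ii}, q_{ij}q_{ji})! ( -K̃_{mα_i+α_j} + L̃_{mα_i+α_j} ). -/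
/-!
Write `q = χ(α_i, α_i)`, `l = χ(α_i, α_j)`, `r = χ(α_j, α_i)`. Since `Ẽ⁺_m` and `F̃⁺_m` are
homogeneous of weight `w_m = m α_i + α_j`, every `K̃_a` and `L̃_a` commutes past them up to a
scalar. Expanding `F̃⁺_{m+1}` (resp. `Ẽ⁺_{m+1}`) by the Leibniz rule for the commutator and using
`[Ẽ_i, F̃_j] = δ_{ij} (-K̃_{α_i} + L̃_{α_i})` gives `[Ẽ_i, F̃⁺_{m+1}] = a_{m+1} F̃⁺_m K̃_{α_i}` and
`[Ẽ⁺_{m+1}, F̃_i] = b_{m+1} Ẽ⁺_m L̃_{α_i}` (`a = coeffEFp`, `b = coeffEpF`). A simultaneous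
induction on `m` then proves `[Ẽ⁺_m, F̃⁺_m] = c_m (-K̃_{w_m} + L̃_{w_m})` together with
`[Ẽ⁺_{m+1}, F̃⁺_m] = -c_{m+1} Ẽ_i K̃_{w_m}`, where `c_m = (m)_q! (m; q, lr)!`; the recursions
for `c_m` reduce to the identity `(m)_q (q - 1) = q^m - 1`.
-/

open Finset

section TwistedCommutators

variable {R A : Type*} [CommRing R] [Ring A] [Algebra R A]

def QCommute (c : R) (a b : A) : Prop := a * b = c • (b * a)

theorem QCommute.mul_eq {a b : A} {c : R} (h : QCommute c a b) : a * b = c • (b * a) := h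

theorem QCommute.mul_right {a x y : A} {c d : R} (hx : QCommute c a x) (hy : QCommute d a y) :
    QCommute (c * d) a (x * y) := by
  rw [QCommute, ← mul_assoc, hx, smul_mul_assoc, mul_assoc, hy, mul_smul_comm, smul_smul,
    mul_assoc]

theorem QCommute.smul_right {a x : A} {c : R} (h : QCommute c a x) (s : R) :
    QCommute c a (s • x) := by
  rw [QCommute, mul_smul_comm, h, smul_mul_assoc, smul_comm]

theorem QCommute.sub_right {a x y : A} {c : R} (hx : QCommute c a x) (hy : QCommute c a y) :
    QCommute c a (x - y) := by
  rw [QCommute, mul_sub, sub_mul, smul_sub, hx, hy]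

theorem QCommute.mul_sub_smul_mul {a x y : A} {c d : R} (hx : QCommute c a x)
    (hy : QCommute d a y) (s : R) : QCommute (c * d) a (x * y - s • (y * x)) :=
  (hx.mul_right hy).sub_right (mul_comm d c ▸ (hy.mul_right hx).smul_right s)

theorem lie_mul_sub_smul_mul (x y z : A) (c : R) :
    ⁅x, y * z - c • (z * y)⁆ = ⁅x, y⁆ * z + y * ⁅x, z⁆ - c • (⁅x, z⁆ * y + z * ⁅x, y⁆) := by
  simp only [Ring.lie_def, mul_sub, sub_mul, mul_smul_comm, smul_mul_assoc, mul_assoc]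
  module

theorem mul_sub_smul_mul_lie (x y z : A) (c : R) :
    ⁅y * z - c • (z * y), x⁆ = y * ⁅z, x⁆ + ⁅y, x⁆ * z - c • (z * ⁅y, x⁆ + ⁅z, x⁆ * y) := by
  simp only [Ring.lie_def, mul_sub, sub_mul, mul_smul_comm, smul_mul_assoc, mul_assoc]
  module

theorem QCommute.mul_mul_sub_smul {a y : A} {c : R} (h : QCommute c a y) (x : A) :
    x * a * y - c • (y * x * a) = c • (⁅x, y⁆ * a) := by
  rw [mul_assoc, h.mul_eq, mul_smul_comm, ← smul_sub, Ring.lie_def, sub_mul, mul_assoc,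
    mul_assoc]

theorem QCommute.smul_mul_mul_sub {a y : A} {c : R} (h : QCommute c a y) (x : A) :
    c • (y * x * a) - x * a * y = c • (⁅y, x⁆ * a) := by
  rw [mul_assoc x, h.mul_eq, mul_smul_comm, ← smul_sub, Ring.lie_def, sub_mul, mul_assoc,
    mul_assoc]

theorem QCommute.smul_mul_mul_sub_of_inv {K : Type*} [Field K] [Algebra K A] {a y : A}
    {c : K} (h : QCommute c⁻¹ a y) (hc : c ≠ 0) (x : A) :
    c • (x * a * y) - y * x * a = ⁅x, y⁆ * a := by
  rw [mul_assoc x, h.mul_eq, mul_smul_comm, smul_smul, mul_inv_cancel₀ hc, one_smul,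
    Ring.lie_def, sub_mul, mul_assoc, mul_assoc]

end TwistedCommutators

section Weight

variable {N : ℕ} (i j : Fin N)

noncomputable def weight (m : ℕ) : Mz N := (m : ℤ) • alphav i + alphav j

theorem weight_zero : weight i j 0 = alphav j := by simp [weight]

theorem weight_succ (m : ℕ) : weight i j (m + 1) = weight i j m + alphav i := by
  rw [weight, weight, Nat.cast_succ, add_smul, one_smul, add_right_comm]

end Weight

namespace IsBihom

variable {N : ℕ} {χ : Mz N → Mz N → ℂˣ}

theorem apply_zero_left (hχ : IsBihom χ) (b : Mz N) : χ 0 b = 1 := by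
  simpa using hχ.2 0 0 b

theorem apply_zero_right (hχ : IsBihom χ) (a : Mz N) : χ a 0 = 1 := by
  simpa using hχ.1 a 0 0

theorem apply_neg_left (hχ : IsBihom χ) (a b : Mz N) : (χ (-a) b : ℂ) = (χ a b : ℂ)⁻¹ := by
  have h : χ (-a) b * χ a b = 1 := by rw [← hχ.2, neg_add_cancel, hχ.apply_zero_left]
  rw [eq_inv_of_mul_eq_one_left h, Units.val_inv_eq_inv_val]

theorem apply_neg_right_s9 (hχ : IsBihom χ) (a b : Mz N) : (χ a (-b) : ℂ) = (χ a b : ℂ)⁻¹ := by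
  have h : χ a (-b) * χ a b = 1 := by rw [← hχ.1, neg_add_cancel, hχ.apply_zero_right]
  rw [eq_inv_of_mul_eq_one_left h, Units.val_inv_eq_inv_val]

theorem apply_alphav_weight (hχ : IsBihom χ) (i j : Fin N) (m : ℕ) :
    (χ (alphav i) (weight i j m) : ℂ) =
      (χ (alphav i) (alphav i) : ℂ) ^ m * χ (alphav i) (alphav j) := by
  induction m with
  | zero => simp [weight_zero]
  | succ m ih => rw [weight_succ, hχ.1, Units.val_mul, ih]; ring

theorem apply_weight_alphav (hχ : IsBihom χ) (i j : Fin N) (m : ℕ) :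
    (χ (weight i j m) (alphav i) : ℂ) =
      (χ (alphav i) (alphav i) : ℂ) ^ m * χ (alphav j) (alphav i) := by
  induction m with
  | zero => simp [weight_zero]
  | succ m ih => rw [weight_succ, hχ.2, Units.val_mul, ih]; ring

end IsBihom

section Relations

variable {N : ℕ} (χ : Mz N → Mz N → ℂˣ)

theorem elK_mul_elK (a b : Mz N) : elK χ a * elK χ b = elK χ (a + b) :=
  (map_mul _ _ _).symm.trans (RingQuot.mkAlgHom_rel ℂ (URel.KK a b))

theorem elL_mul_elL (a b : Mz N) : elL χ a * elL χ b = elL χ (a + b) :=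
  (map_mul _ _ _).symm.trans (RingQuot.mkAlgHom_rel ℂ (URel.LL a b))

theorem commute_elK_elL (a b : Mz N) : Commute (elK χ a) (elL χ b) := by
  have h := RingQuot.mkAlgHom_rel ℂ (URel.KL (χ := χ) a b)
  simp only [map_mul] at h
  exact h

theorem qcommute_elK_elE (a : Mz N) (i : Fin N) :
    QCommute (χ a (alphav i) : ℂ) (elK χ a) (elE χ i) := by
  have h := RingQuot.mkAlgHom_rel ℂ (URel.KE (χ := χ) a i)
  simp only [map_mul, map_smul] at h
  exact h

theorem qcommute_elL_elF (a : Mz N) (i : Fin N) :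
    QCommute (χ (alphav i) a : ℂ) (elL χ a) (elF χ i) := by
  have h := RingQuot.mkAlgHom_rel ℂ (URel.LF (χ := χ) a i)
  simp only [map_mul, map_smul] at h
  exact h

variable {χ}

theorem qcommute_elL_elE (hχ : IsBihom χ) (a : Mz N) (i : Fin N) :
    QCommute (χ (alphav i) a : ℂ)⁻¹ (elL χ a) (elE χ i) := by
  have h := RingQuot.mkAlgHom_rel ℂ (URel.LE (χ := χ) a i)
  simp only [map_mul, map_smul, hχ.apply_neg_left] at h
  exact h

theorem qcommute_elK_elF (hχ : IsBihom χ) (a : Mz N) (i : Fin N) :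
    QCommute (χ a (alphav i) : ℂ)⁻¹ (elK χ a) (elF χ i) := by
  have h := RingQuot.mkAlgHom_rel ℂ (URel.KF (χ := χ) a i)
  simp only [map_mul, map_smul, hχ.apply_neg_right_s9] at h
  exact h

variable (χ)

noncomputable def elH (a : Mz N) : tU χ := -elK χ a + elL χ a

theorem lie_elE_elF (i j : Fin N) :
    ⁅elE χ i, elF χ j⁆ = if i = j then elH χ (alphav i) else 0 := by
  have h := RingQuot.mkAlgHom_rel ℂ (URel.EF (χ := χ) i j)
  rw [Ring.lie_def]
  split_ifs at h ⊢ <;> simp only [map_sub, map_mul, map_add, map_neg, map_zero] at h <;> exact h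

theorem lie_elE_elF_self (i : Fin N) : ⁅elE χ i, elF χ i⁆ = elH χ (alphav i) := by
  simpa using lie_elE_elF χ i i

theorem lie_elE_elF_of_ne {i j : Fin N} (h : i ≠ j) : ⁅elE χ i, elF χ j⁆ = 0 := by
  simpa [h] using lie_elE_elF χ i j

theorem Ep_succ (i j : Fin N) (m : ℕ) : Ep χ i j (m + 1) = elE χ i * Ep χ i j m -
    ((χ (alphav i) (alphav i) : ℂ) ^ m * χ (alphav i) (alphav j)) • (Ep χ i j m * elE χ i) :=
  rfl

theorem Fp_succ (i j : Fin N) (m : ℕ) : Fp χ i j (m + 1) = elF χ i * Fp χ i j m -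
    ((χ (alphav i) (alphav i) : ℂ) ^ m * χ (alphav j) (alphav i)) • (Fp χ i j m * elF χ i) :=
  rfl

end Relations

section Homogeneity

variable {N : ℕ} {χ : Mz N → Mz N → ℂˣ} (i j : Fin N)

theorem qcommute_elK_Ep (hχ : IsBihom χ) (a : Mz N) (m : ℕ) :
    QCommute (χ a (weight i j m) : ℂ) (elK χ a) (Ep χ i j m) := by
  induction m with
  | zero => rw [weight_zero]; exact qcommute_elK_elE χ a j
  | succ m ih =>
    rw [weight_succ, hχ.1, Units.val_mul, mul_comm]
    exact (qcommute_elK_elE χ a i).mul_sub_smul_mul ih _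

theorem qcommute_elL_Ep (hχ : IsBihom χ) (a : Mz N) (m : ℕ) :
    QCommute (χ (weight i j m) a : ℂ)⁻¹ (elL χ a) (Ep χ i j m) := by
  induction m with
  | zero => rw [weight_zero]; exact qcommute_elL_elE hχ a j
  | succ m ih =>
    rw [weight_succ, hχ.2, Units.val_mul, mul_inv, mul_comm]
    exact (qcommute_elL_elE hχ a i).mul_sub_smul_mul ih _

theorem qcommute_elK_Fp (hχ : IsBihom χ) (a : Mz N) (m : ℕ) :
    QCommute (χ a (weight i j m) : ℂ)⁻¹ (elK χ a) (Fp χ i j m) := by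
  induction m with
  | zero => rw [weight_zero]; exact qcommute_elK_elF hχ a j
  | succ m ih =>
    rw [weight_succ, hχ.1, Units.val_mul, mul_inv, mul_comm]
    exact (qcommute_elK_elF hχ a i).mul_sub_smul_mul ih _

theorem qcommute_elL_Fp (hχ : IsBihom χ) (a : Mz N) (m : ℕ) :
    QCommute (χ (weight i j m) a : ℂ) (elL χ a) (Fp χ i j m) := by
  induction m with
  | zero => rw [weight_zero]; exact qcommute_elL_elF χ a j
  | succ m ih =>
    rw [weight_succ, hχ.2, Units.val_mul, mul_comm]
    exact (qcommute_elL_elF χ a i).mul_sub_smul_mul ih _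

end Homogeneity

section Coefficients

variable (q l r t : ℂ)

noncomputable def coeffEFp (m : ℕ) : ℂ := ∑ k ∈ range m, (q ^ k * r - (q ^ k * l)⁻¹)

noncomputable def coeffEpF (m : ℕ) : ℂ := ∑ k ∈ range m, ((q ^ k * r)⁻¹ - q ^ k * l)

noncomputable def coeffEpFp (m : ℕ) : ℂ := qfact m q * tfact m q t

theorem coeffEFp_succ (m : ℕ) :
    coeffEFp q l r (m + 1) = coeffEFp q l r m + (q ^ m * r - (q ^ m * l)⁻¹) :=
  sum_range_succ _ _

theorem coeffEpF_succ (m : ℕ) :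
    coeffEpF q l r (m + 1) = coeffEpF q l r m + ((q ^ m * r)⁻¹ - q ^ m * l) :=
  sum_range_succ _ _

theorem qnum_succ (m : ℕ) : qnum (m + 1) q = qnum m q + q ^ m := sum_range_succ _ _

theorem coeffEpFp_zero : coeffEpFp q t 0 = 1 := by simp [coeffEpFp, qfact, tfact]

theorem coeffEpFp_succ (m : ℕ) :
    coeffEpFp q t (m + 1) = coeffEpFp q t m * (qnum (m + 1) q * (1 - q ^ m * t)) := by
  simp only [coeffEpFp, qfact, tfact, prod_range_succ]; ring

theorem coeffEpFp_one : coeffEpFp q t 1 = 1 - t := by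
  simp [coeffEpFp_succ, coeffEpFp_zero, qnum]

variable {q l r}

theorem coeffEFp_mul (hq : q ≠ 0) (hl : l ≠ 0) (m : ℕ) :
    coeffEFp q l r m * (q ^ m * l) = (l * r * q ^ m - q) * qnum m q := by
  induction m with
  | zero => simp [coeffEFp, qnum]
  | succ m ih =>
    have hinv : (q ^ m * l)⁻¹ * (q ^ (m + 1) * l) = q := by field_simp; ring
    have hgeom : qnum m q * (q - 1) = q ^ m - 1 := geom_sum_mul q m
    rw [coeffEFp_succ, qnum_succ]
    linear_combination q * ih - hinv - q * hgeom

theorem coeffEpF_mul (hq : q ≠ 0) (hr : r ≠ 0) (m : ℕ) :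
    coeffEpF q l r m * (q ^ m * r) = (q - l * r * q ^ m) * qnum m q := by
  induction m with
  | zero => simp [coeffEpF, qnum]
  | succ m ih =>
    have hinv : (q ^ m * r)⁻¹ * (q ^ (m + 1) * r) = q := by field_simp; ring
    have hgeom : qnum m q * (q - 1) = q ^ m - 1 := geom_sum_mul q m
    rw [coeffEpF_succ, qnum_succ]
    linear_combination q * ih + hinv + q * hgeom

theorem coeffEpFp_succ_eq (hq : q ≠ 0) (hr : r ≠ 0) (m : ℕ) :
    coeffEpFp q (l * r) (m + 1) =
      coeffEpF q l r (m + 1) * (q ^ m * r) * coeffEpFp q (l * r) m := by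
  have h := coeffEpF_mul (l := l) hq hr (m + 1)
  refine mul_left_cancel₀ hq ?_
  rw [coeffEpFp_succ]
  linear_combination -coeffEpFp q (l * r) m * h

theorem coeffEpFp_succ_succ_eq (hq : q ≠ 0) (hl : l ≠ 0) (m : ℕ) :
    -coeffEpFp q (l * r) (m + 1 + 1) = coeffEpFp q (l * r) (m + 1) *
      (q ^ (m + 1) * l * (q ^ (m + 1) * r) - 1 + coeffEFp q l r (m + 1) * (q ^ (m + 1) * l)) := by
  have h := coeffEFp_mul (r := r) hq hl (m + 1)
  have hgeom : qnum (m + 1) q * (q - 1) = q ^ (m + 1) - 1 := geom_sum_mul q (m + 1)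
  rw [h, coeffEpFp_succ q _ (m + 1), qnum_succ]
  linear_combination coeffEpFp q (l * r) (m + 1) * hgeom

end Coefficients

section Commutators

variable {N : ℕ} {χ : Mz N → Mz N → ℂˣ}

/- Generic lemmas such as `neg_mul` or `lie_sub` do not match the `Neg` and `Sub` instances of
`RingQuot` under `rw`, so `elH` is used in this form and brackets are expanded with
`lie_mul_sub_smul_mul`. -/
theorem elH_eq_sub (a : Mz N) : elH χ a = elL χ a - elK χ a := neg_add_eq_sub _ _

theorem elH_mul_of_qcommute {a : Mz N} {x : tU χ} {κ μ : ℂ} (hK : QCommute κ (elK χ a) x)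
    (hL : QCommute μ (elL χ a) x) :
    elH χ a * x = μ • (x * elL χ a) - κ • (x * elK χ a) := by
  rw [elH_eq_sub, sub_mul, hK.mul_eq, hL.mul_eq]

theorem elH_mul_elL_add_elH_mul_elK (a b : Mz N) :
    elH χ a * elL χ b + elH χ b * elK χ a = elH χ (a + b) := by
  rw [elH_eq_sub, elH_eq_sub, elH_eq_sub, sub_mul, sub_mul, elL_mul_elL,
    (commute_elK_elL χ a b).eq, elK_mul_elK, add_comm b a]
  abel

theorem elE_mul_elH_sub (hχ : IsBihom χ) (i : Fin N) (a : Mz N) :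
    elE χ i * elH χ a - (χ (alphav i) a : ℂ) • (elH χ a * elE χ i) =
      ((χ (alphav i) a : ℂ) * χ a (alphav i) - 1) • (elE χ i * elK χ a) := by
  rw [elH_mul_of_qcommute (qcommute_elK_elE χ a i) (qcommute_elL_elE hχ a i), elH_eq_sub,
    mul_sub, smul_sub, smul_smul, smul_smul, mul_inv_cancel₀ (Units.ne_zero _), one_smul]
  module

end Commutators

section RootVectors

variable {N : ℕ} {χ : Mz N → Mz N → ℂˣ} {i j : Fin N}

theorem lie_elE_Fp_succ_eq (hχ : IsBihom χ) (n : ℕ) :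
    ⁅elE χ i, Fp χ i j (n + 1)⁆ = elF χ i * ⁅elE χ i, Fp χ i j n⁆ -
      ((χ (alphav i) (alphav i) : ℂ) ^ n * χ (alphav j) (alphav i)) •
        (⁅elE χ i, Fp χ i j n⁆ * elF χ i) +
      ((χ (alphav i) (alphav i) : ℂ) ^ n * χ (alphav j) (alphav i) -
        ((χ (alphav i) (alphav i) : ℂ) ^ n * χ (alphav i) (alphav j))⁻¹) •
        (Fp χ i j n * elK χ (alphav i)) := by
  have hH := elH_mul_of_qcommute (qcommute_elK_Fp i j hχ (alphav i) n)
    (qcommute_elL_Fp i j hχ (alphav i) n)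
  rw [hχ.apply_alphav_weight, hχ.apply_weight_alphav] at hH
  rw [Fp_succ, lie_mul_sub_smul_mul, lie_elE_elF_self, hH, elH_eq_sub, mul_sub]
  module

theorem lie_elE_Fp_succ (hχ : IsBihom χ) (hij : i ≠ j) (m : ℕ) :
    ⁅elE χ i, Fp χ i j (m + 1)⁆ = coeffEFp (χ (alphav i) (alphav i)) (χ (alphav i) (alphav j))
      (χ (alphav j) (alphav i)) (m + 1) • (Fp χ i j m * elK χ (alphav i)) := by
  induction m with
  | zero =>
    rw [lie_elE_Fp_succ_eq hχ, Fp, lie_elE_elF_of_ne χ hij]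
    simp [coeffEFp]
  | succ m ih =>
    have hq : (χ (alphav i) (alphav i) : ℂ) ≠ 0 := Units.ne_zero _
    have hKF := (qcommute_elK_elF hχ (alphav i) i).mul_eq
    rw [lie_elE_Fp_succ_eq hχ, ih, coeffEFp_succ _ _ _ (m + 1), Fp_succ χ i j m]
    simp only [mul_smul_comm, smul_mul_assoc, sub_mul, mul_assoc, hKF]
    match_scalars
    · ring
    · field_simp
      ring

theorem lie_Ep_succ_elF_eq (hχ : IsBihom χ) (n : ℕ) :
    ⁅Ep χ i j (n + 1), elF χ i⁆ = elE χ i * ⁅Ep χ i j n, elF χ i⁆ -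
      ((χ (alphav i) (alphav i) : ℂ) ^ n * χ (alphav i) (alphav j)) •
        (⁅Ep χ i j n, elF χ i⁆ * elE χ i) +
      (((χ (alphav i) (alphav i) : ℂ) ^ n * χ (alphav j) (alphav i))⁻¹ -
        (χ (alphav i) (alphav i) : ℂ) ^ n * χ (alphav i) (alphav j)) •
        (Ep χ i j n * elL χ (alphav i)) := by
  have hH := elH_mul_of_qcommute (qcommute_elK_Ep i j hχ (alphav i) n)
    (qcommute_elL_Ep i j hχ (alphav i) n)
  rw [hχ.apply_alphav_weight, hχ.apply_weight_alphav] at hH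
  rw [Ep_succ, mul_sub_smul_mul_lie, lie_elE_elF_self, hH, elH_eq_sub, mul_sub]
  module

theorem lie_Ep_succ_elF (hχ : IsBihom χ) (hij : i ≠ j) (m : ℕ) :
    ⁅Ep χ i j (m + 1), elF χ i⁆ = coeffEpF (χ (alphav i) (alphav i)) (χ (alphav i) (alphav j))
      (χ (alphav j) (alphav i)) (m + 1) • (Ep χ i j m * elL χ (alphav i)) := by
  induction m with
  | zero =>
    rw [lie_Ep_succ_elF_eq hχ, Ep, lie_elE_elF_of_ne χ hij.symm]
    simp [coeffEpF]
  | succ m ih =>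
    have hq : (χ (alphav i) (alphav i) : ℂ) ≠ 0 := Units.ne_zero _
    have hLE := (qcommute_elL_elE hχ (alphav i) i).mul_eq
    rw [lie_Ep_succ_elF_eq hχ, ih, coeffEpF_succ _ _ _ (m + 1), Ep_succ χ i j m]
    simp only [mul_smul_comm, smul_mul_assoc, sub_mul, mul_assoc, hLE]
    match_scalars
    · ring
    · field_simp
      ring

end RootVectors

section Main

variable {N : ℕ} {χ : Mz N → Mz N → ℂˣ} {i j : Fin N}

theorem lie_Ep_one_Fp_zero (hχ : IsBihom χ) (hij : i ≠ j) :
    ⁅Ep χ i j 1, Fp χ i j 0⁆ = (-coeffEpFp (χ (alphav i) (alphav i))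
      ((χ (alphav i) (alphav j) : ℂ) * χ (alphav j) (alphav i)) 1) •
        (elE χ i * elK χ (weight i j 0)) := by
  rw [Ep_succ, Ep, Fp, mul_sub_smul_mul_lie, lie_elE_elF_of_ne χ hij, lie_elE_elF_self,
    weight_zero, coeffEpFp_one, pow_zero, one_mul]
  simp only [zero_mul, mul_zero, add_zero, zero_add]
  rw [elE_mul_elH_sub hχ]
  module

theorem lie_Ep_Fp_succ (hχ : IsBihom χ) (hij : i ≠ j) (m : ℕ)
    (hP : ⁅Ep χ i j m, Fp χ i j m⁆ = coeffEpFp (χ (alphav i) (alphav i))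
      ((χ (alphav i) (alphav j) : ℂ) * χ (alphav j) (alphav i)) m • elH χ (weight i j m))
    (hW : ⁅Ep χ i j (m + 1), Fp χ i j m⁆ = (-coeffEpFp (χ (alphav i) (alphav i))
      ((χ (alphav i) (alphav j) : ℂ) * χ (alphav j) (alphav i)) (m + 1)) •
        (elE χ i * elK χ (weight i j m))) :
    ⁅Ep χ i j (m + 1), Fp χ i j (m + 1)⁆ = coeffEpFp (χ (alphav i) (alphav i))
      ((χ (alphav i) (alphav j) : ℂ) * χ (alphav j) (alphav i)) (m + 1) •
        elH χ (weight i j (m + 1)) := by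
  set b := coeffEpF (χ (alphav i) (alphav i)) (χ (alphav i) (alphav j))
    (χ (alphav j) (alphav i)) (m + 1)
  set c := coeffEpFp (χ (alphav i) (alphav i))
    ((χ (alphav i) (alphav j) : ℂ) * χ (alphav j) (alphav i)) (m + 1)
  set s := (χ (alphav i) (alphav i) : ℂ) ^ m * χ (alphav j) (alphav i)
  have hc : c = b * s * coeffEpFp (χ (alphav i) (alphav i))
      ((χ (alphav i) (alphav j) : ℂ) * χ (alphav j) (alphav i)) m :=
    coeffEpFp_succ_eq (Units.ne_zero _) (Units.ne_zero _) m
  have hLF : QCommute s (elL χ (alphav i)) (Fp χ i j m) := by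
    simpa only [hχ.apply_weight_alphav] using qcommute_elL_Fp i j hχ (alphav i) m
  have hKF : QCommute s⁻¹ (elK χ (weight i j m)) (elF χ i) := by
    simpa only [hχ.apply_weight_alphav] using qcommute_elK_elF hχ (weight i j m) i
  calc ⁅Ep χ i j (m + 1), Fp χ i j (m + 1)⁆
      = b • (Ep χ i j m * elL χ (alphav i) * Fp χ i j m -
            s • (Fp χ i j m * Ep χ i j m * elL χ (alphav i))) +
          c • (s • (elE χ i * elK χ (weight i j m) * elF χ i) -
            elF χ i * elE χ i * elK χ (weight i j m)) := by
        rw [Fp_succ, lie_mul_sub_smul_mul, lie_Ep_succ_elF hχ hij, hW]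
        simp only [smul_mul_assoc, mul_smul_comm, mul_assoc]
        module
    _ = b • (s • (⁅Ep χ i j m, Fp χ i j m⁆ * elL χ (alphav i))) +
          c • (⁅elE χ i, elF χ i⁆ * elK χ (weight i j m)) := by
        rw [hLF.mul_mul_sub_smul, hKF.smul_mul_mul_sub_of_inv (by simp [s])]
    _ = c • (elH χ (weight i j m) * elL χ (alphav i) +
          elH χ (alphav i) * elK χ (weight i j m)) := by
        rw [hP, lie_elE_elF_self, hc]
        simp only [smul_mul_assoc]
        module
    _ = c • elH χ (weight i j (m + 1)) := by
        rw [elH_mul_elL_add_elH_mul_elK, weight_succ]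

theorem lie_Ep_succ_Fp_succ (hχ : IsBihom χ) (hij : i ≠ j) (m : ℕ)
    (hP : ⁅Ep χ i j (m + 1), Fp χ i j (m + 1)⁆ = coeffEpFp (χ (alphav i) (alphav i))
      ((χ (alphav i) (alphav j) : ℂ) * χ (alphav j) (alphav i)) (m + 1) •
        elH χ (weight i j (m + 1)))
    (hW : ⁅Ep χ i j (m + 1), Fp χ i j m⁆ = (-coeffEpFp (χ (alphav i) (alphav i))
      ((χ (alphav i) (alphav j) : ℂ) * χ (alphav j) (alphav i)) (m + 1)) •
        (elE χ i * elK χ (weight i j m))) :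
    ⁅Ep χ i j (m + 1 + 1), Fp χ i j (m + 1)⁆ = (-coeffEpFp (χ (alphav i) (alphav i))
      ((χ (alphav i) (alphav j) : ℂ) * χ (alphav j) (alphav i)) (m + 1 + 1)) •
        (elE χ i * elK χ (weight i j (m + 1))) := by
  set a := coeffEFp (χ (alphav i) (alphav i)) (χ (alphav i) (alphav j))
    (χ (alphav j) (alphav i)) (m + 1)
  set c := coeffEpFp (χ (alphav i) (alphav i))
    ((χ (alphav i) (alphav j) : ℂ) * χ (alphav j) (alphav i)) (m + 1)
  set d := (χ (alphav i) (alphav i) : ℂ) ^ (m + 1) * χ (alphav i) (alphav j)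
  have hKE : QCommute d (elK χ (alphav i)) (Ep χ i j (m + 1)) := by
    simpa only [hχ.apply_alphav_weight] using qcommute_elK_Ep i j hχ (alphav i) (m + 1)
  have hEH := elE_mul_elH_sub hχ i (weight i j (m + 1))
  rw [hχ.apply_alphav_weight, hχ.apply_weight_alphav] at hEH
  calc ⁅Ep χ i j (m + 1 + 1), Fp χ i j (m + 1)⁆
      = c • (elE χ i * elH χ (weight i j (m + 1)) -
            d • (elH χ (weight i j (m + 1)) * elE χ i)) +
          (-a) • (d • (Ep χ i j (m + 1) * Fp χ i j m * elK χ (alphav i)) -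
            Fp χ i j m * elK χ (alphav i) * Ep χ i j (m + 1)) := by
        rw [Ep_succ χ i j (m + 1), mul_sub_smul_mul_lie, hP, lie_elE_Fp_succ hχ hij]
        simp only [smul_mul_assoc, mul_smul_comm, mul_assoc]
        module
    _ = c • ((d * ((χ (alphav i) (alphav i) : ℂ) ^ (m + 1) * χ (alphav j) (alphav i)) - 1) •
            (elE χ i * elK χ (weight i j (m + 1)))) +
          (-a) • (d • (⁅Ep χ i j (m + 1), Fp χ i j m⁆ * elK χ (alphav i))) := by
        rw [hEH, hKE.smul_mul_mul_sub]
    _ = _ := by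
        rw [hW, coeffEpFp_succ_succ_eq (Units.ne_zero _) (Units.ne_zero _)]
        simp only [smul_mul_assoc, mul_assoc, elK_mul_elK, ← weight_succ]
        module

theorem lie_Ep_Fp_and_lie_Ep_succ_Fp (hχ : IsBihom χ) (hij : i ≠ j) (m : ℕ) :
    ⁅Ep χ i j m, Fp χ i j m⁆ = coeffEpFp (χ (alphav i) (alphav i))
        ((χ (alphav i) (alphav j) : ℂ) * χ (alphav j) (alphav i)) m • elH χ (weight i j m) ∧
      ⁅Ep χ i j (m + 1), Fp χ i j m⁆ = (-coeffEpFp (χ (alphav i) (alphav i))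
        ((χ (alphav i) (alphav j) : ℂ) * χ (alphav j) (alphav i)) (m + 1)) •
          (elE χ i * elK χ (weight i j m)) := by
  induction m with
  | zero =>
    refine ⟨?_, lie_Ep_one_Fp_zero hχ hij⟩
    rw [coeffEpFp_zero, one_smul, weight_zero]
    exact lie_elE_elF_self χ j
  | succ m ih =>
    have hP := lie_Ep_Fp_succ hχ hij m ih.1 ih.2
    exact ⟨hP, lie_Ep_succ_Fp_succ hχ hij m hP ih.2⟩

end Main

/-- In U~(chi): [E+_{m,a_i,a_j}, F+_{m,a_i,a_j}] = (m)_{q_ii}! (m; q_ii, q_ij q_ji)! (-K_{m a_i + a_j} + L_{m a_i + a_j}). -/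
theorem commutator_Ep_Fp {N : ℕ} (χ : Mz N → Mz N → ℂˣ) (hχ : IsBihom χ)
    (i j : Fin N) (hij : i ≠ j) (m : ℕ) :
    Ep χ i j m * Fp χ i j m - Fp χ i j m * Ep χ i j m =
      (qfact m (χ (alphav i) (alphav i)) *
        tfact m (χ (alphav i) (alphav i))
          ((χ (alphav i) (alphav j) : ℂ) * (χ (alphav j) (alphav i) : ℂ))) •
        (-elK χ ((m : ℤ) • alphav i + alphav j) + elL χ ((m : ℤ) • alphav i + alphav j)) :=
  (lie_Ep_Fp_and_lie_Ep_succ_Fp hχ hij m).1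
end
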